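/- If f, g are smooth on 𝕋² and g is (𝕋/κ)²-periodic for some κ ∈ ℕ, then ‖fg‖_{L²(𝕋²)} ≤ ‖f‖_{L²} ‖g‖_{L²} + C κ^{-1/2} ‖f‖_{C¹} ‖g‖_{L²} for a universal constant C ≥ 0. -/

import Mathlib

open Real MeasureTheory
open Set

/-- The fundamental domain `𝕋² = [−π, π]²`. -/
noncomputable def Q2 : Set (ℝ × ℝ) := Set.Icc (-π) π ×ˢ Set.Icc (-π) π



lemma Q2_ae_eq : Q2 =ᵐ[volume] (Set.Ico (-π) π ×ˢ Set.Ico (-π) π : Set (ℝ × ℝ)) := by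
  rw [MeasureTheory.ae_eq_set]
  constructor
  · have hsub : Q2 \ (Set.Ico (-π) π ×ˢ Set.Ico (-π) π) ⊆
        ({π} ×ˢ (Set.univ : Set ℝ)) ∪ ((Set.univ : Set ℝ) ×ˢ {π}) := by
      rintro ⟨z1, z2⟩ ⟨⟨h1, h2⟩, hne⟩
      simp only [Set.mem_prod, Set.mem_Ico, not_and_or, not_and, not_lt] at hne
      rcases hne with h | h
      · left
        have : z1 = π := le_antisymm h1.2 (h.resolve_left (not_not_intro h1.1))
        simp [this]
      · right
        have : z2 = π := le_antisymm h2.2 (h.resolve_left (not_not_intro h2.1))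
        simp [this]
    refine measure_mono_null hsub ?_
    refine measure_union_null ?_ ?_ <;>
      · rw [Measure.volume_eq_prod, Measure.prod_prod]
        simp
  · have : (Set.Ico (-π) π ×ˢ Set.Ico (-π) π) \ Q2 = ∅ := by
      rw [Set.diff_eq_empty]
      exact Set.prod_mono Set.Ico_subset_Icc_self Set.Ico_subset_Icc_self
    rw [this]; simp


noncomputable def aa (n : ℕ) (j : ℕ) : ℝ := -π + j * (2*π/n)

noncomputable def cell (n : ℕ) (p : ℕ × ℕ) : Set (ℝ × ℝ) :=
  Set.Ico (aa n p.1) (aa n (p.1+1)) ×ˢ Set.Ico (aa n p.2) (aa n (p.2+1))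

lemma eps_pos {n : ℕ} (hn : 1 ≤ n) : 0 < 2*π/n := by
  have : (0:ℝ) < n := by exact_mod_cast hn
  positivity

lemma aa_lt {n : ℕ} (hn : 1 ≤ n) (j : ℕ) : aa n j < aa n (j+1) := by
  have h := eps_pos hn
  simp only [aa]
  push_cast
  nlinarith

lemma aa_mono {n : ℕ} (hn : 1 ≤ n) : StrictMono (aa n) :=
  strictMono_nat_of_lt_succ (aa_lt hn)

lemma aa_zero (n : ℕ) : aa n 0 = -π := by simp [aa]

lemma aa_top {n : ℕ} (hn : 1 ≤ n) : aa n n = π := by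
  have : (n:ℝ) ≠ 0 := by positivity
  have h2 : (n:ℝ) * (2*π/n) = 2*π := by field_simp
  simp only [aa, h2]
  ring

lemma aa_succ_sub (n j : ℕ) : aa n (j+1) - aa n j = 2*π/n := by
  simp only [aa]; push_cast; ring

lemma cell_measurable (n : ℕ) (p : ℕ × ℕ) : MeasurableSet (cell n p) :=
  measurableSet_Ico.prod measurableSet_Ico

lemma cell_integrableOn {n : ℕ} {h : ℝ × ℝ → ℝ} (hc : Continuous h) (p : ℕ × ℕ) :
    IntegrableOn h (cell n p) := by
  refine IntegrableOn.mono_set ?_ (Set.prod_mono Set.Ico_subset_Icc_self Set.Ico_subset_Icc_self)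
  exact hc.continuousOn.integrableOn_compact (isCompact_Icc.prod isCompact_Icc)

lemma cell_disjoint {n : ℕ} (hn : 1 ≤ n) {p q : ℕ × ℕ} (hpq : p ≠ q) :
    Disjoint (cell n p) (cell n q) := by
  have key : ∀ j k : ℕ, j ≠ k →
      Disjoint (Set.Ico (aa n j) (aa n (j+1))) (Set.Ico (aa n k) (aa n (k+1))) := by
    intro j k hjk
    rw [Set.Ico_disjoint_Ico]
    rcases lt_or_gt_of_ne hjk with h | h
    · have : aa n (j+1) ≤ aa n k := (aa_mono hn).monotone h
      exact le_trans (min_le_left _ _) (le_trans this (le_max_right _ _))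
    · have : aa n (k+1) ≤ aa n j := (aa_mono hn).monotone h
      exact le_trans (min_le_right _ _) (le_trans this (le_max_left _ _))
  by_cases h1 : p.1 = q.1
  · have h2 : p.2 ≠ q.2 := fun h2 => hpq (Prod.ext h1 h2)
    rw [Set.disjoint_left]
    rintro ⟨z1, z2⟩ hz hz'
    exact Set.disjoint_left.mp (key _ _ h2) hz.2 hz'.2
  · rw [Set.disjoint_left]
    rintro ⟨z1, z2⟩ hz hz'
    exact Set.disjoint_left.mp (key _ _ h1) hz.1 hz'.1

lemma union_Ico_aa {n : ℕ} (hn : 1 ≤ n) (m : ℕ) :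
    ⋃ j ∈ Finset.range m, Set.Ico (aa n j) (aa n (j+1)) = Set.Ico (aa n 0) (aa n m) := by
  induction m with
  | zero => simp
  | succ m ih =>
    rw [Finset.range_add_one, Finset.set_biUnion_insert, ih, Set.union_comm,
      Set.Ico_union_Ico_eq_Ico ((aa_mono hn).monotone (Nat.zero_le m)) ((aa_mono hn).monotone (Nat.le_succ m))]

lemma union_cells {n : ℕ} (hn : 1 ≤ n) :
    ⋃ p ∈ Finset.range n ×ˢ Finset.range n, cell n p = Set.Ico (-π) π ×ˢ Set.Ico (-π) π := by
  ext ⟨z1, z2⟩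
  simp only [Set.mem_iUnion, Finset.mem_product, Set.mem_prod, cell, exists_prop, Prod.exists]
  constructor
  · rintro ⟨j, k, ⟨hj, hk⟩, h1, h2⟩
    have u1 := union_Ico_aa hn n
    constructor
    · have : z1 ∈ ⋃ j ∈ Finset.range n, Set.Ico (aa n j) (aa n (j+1)) := by
        exact Set.mem_biUnion hj h1
      rw [u1, aa_zero, aa_top hn] at this; exact this
    · have : z2 ∈ ⋃ j ∈ Finset.range n, Set.Ico (aa n j) (aa n (j+1)) := by
        exact Set.mem_biUnion hk h2
      rw [u1, aa_zero, aa_top hn] at this; exact this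
  · rintro ⟨h1, h2⟩
    have u1 := union_Ico_aa hn n
    rw [show Set.Ico (-π) π = Set.Ico (aa n 0) (aa n n) by rw [aa_zero, aa_top hn], ← u1] at h1 h2
    obtain ⟨j, hj, hj2⟩ := Set.mem_iUnion₂.mp h1
    obtain ⟨k, hk, hk2⟩ := Set.mem_iUnion₂.mp h2
    exact ⟨j, k, ⟨hj, hk⟩, hj2, hk2⟩

lemma split_integral {n : ℕ} (hn : 1 ≤ n) {h : ℝ × ℝ → ℝ} (hc : Continuous h) :
    ∫ z in Q2, h z = ∑ p ∈ Finset.range n ×ˢ Finset.range n, ∫ z in cell n p, h z := by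
  rw [setIntegral_congr_set Q2_ae_eq, ← union_cells hn]
  exact integral_biUnion_finset _ (fun p _ => cell_measurable n p)
    (fun p _ q _ hpq => cell_disjoint hn hpq) (fun p _ => cell_integrableOn hc p)

lemma cell_translate {n : ℕ} (hn : 1 ≤ n) (h : ℝ × ℝ → ℝ)
    (hper : ∀ (z : ℝ × ℝ) (j k : ℕ), h (z.1 + j * (2*π/n), z.2 + k * (2*π/n)) = h z)
    (p : ℕ × ℕ) :
    ∫ z in cell n p, h z = ∫ z in cell n (0, 0), h z := by
  set ε : ℝ := 2*π/n with hε
  set t : ℝ × ℝ := ((p.1 : ℝ) * ε, (p.2 : ℝ) * ε) with ht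
  have hIco : ∀ j : ℕ, Set.Ico (aa n j) (aa n (j+1)) =
      (fun x : ℝ => x + (j : ℝ) * ε) '' Set.Ico (aa n 0) (aa n 1) := by
    intro j
    rw [Set.image_add_const_Ico]
    congr 1 <;> (simp only [aa, hε]; push_cast; ring)
  have himg : cell n p = (fun z : ℝ × ℝ => z + t) '' cell n (0, 0) := by
    ext z
    simp only [cell, Set.mem_image, Set.mem_prod, Prod.exists, hIco p.1, hIco p.2,
      Set.mem_image]
    constructor
    · rintro ⟨⟨x, hx, hx'⟩, ⟨y, hy, hy'⟩⟩
      exact ⟨x, y, ⟨hx, hy⟩, by simp [ht, Prod.ext_iff, ← hx', ← hy']⟩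
    · rintro ⟨x, y, ⟨hx, hy⟩, hxy⟩
      have h1 : x + t.1 = z.1 := by rw [← hxy]; rfl
      have h2 : y + t.2 = z.2 := by rw [← hxy]; rfl
      exact ⟨⟨x, hx, h1⟩, ⟨y, hy, h2⟩⟩
  rw [himg, (measurePreserving_add_right volume t).setIntegral_image_emb
    (measurableEmbedding_addRight t)]
  refine setIntegral_congr_fun (cell_measurable n _) (fun z _ => ?_)
  have : z + t = (z.1 + (p.1 : ℝ) * ε, z.2 + (p.2 : ℝ) * ε) := rfl
  rw [this, hper z p.1 p.2]

lemma exists_rep (x : ℝ) : ∃ (y : ℝ) (k : ℤ), y ∈ Set.Icc (-π) π ∧ x = y + 2*π*k := by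
  have h2π : (0:ℝ) < 2*π := by positivity
  set u : ℝ := (x + π) / (2*π) with hu
  refine ⟨x - 2*π*⌊u⌋, ⌊u⌋, ⟨?_, ?_⟩, by ring⟩
  · have h1 : (⌊u⌋ : ℝ) ≤ u := Int.floor_le u
    rw [hu, le_div_iff₀ h2π] at h1
    linarith
  · have h2 : u < ⌊u⌋ + 1 := Int.lt_floor_add_one u
    rw [hu, div_lt_iff₀ h2π] at h2
    nlinarith [Real.pi_pos]

lemma bdd_of_periodic (F : ℝ × ℝ → ℝ) (hc : Continuous F)
    (hper : ∀ (x : ℝ × ℝ) (k : ℤ × ℤ), F (x.1 + 2*π*k.1, x.2 + 2*π*k.2) = F x) :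
    BddAbove (Set.range F) := by
  have hsub : Set.range F ⊆ F '' Q2 := by
    rintro _ ⟨x, rfl⟩
    obtain ⟨y1, k1, hy1, hx1⟩ := exists_rep x.1
    obtain ⟨y2, k2, hy2, hx2⟩ := exists_rep x.2
    refine ⟨(y1, y2), ⟨hy1, hy2⟩, ?_⟩
    have h := hper (y1, y2) (k1, k2)
    have hx : x = (y1 + 2*π*k1, y2 + 2*π*k2) := Prod.ext hx1 hx2
    rw [hx]; exact (h).symm ▸ rfl
  exact (((isCompact_Icc.prod isCompact_Icc).image hc).bddAbove).mono hsub

lemma fderiv_periodic (f : ℝ × ℝ → ℝ) (hf : Differentiable ℝ f)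
    (hper : ∀ (x : ℝ × ℝ) (k : ℤ × ℤ), f (x.1 + 2*π*k.1, x.2 + 2*π*k.2) = f x)
    (x : ℝ × ℝ) (k : ℤ × ℤ) :
    fderiv ℝ f (x.1 + 2*π*k.1, x.2 + 2*π*k.2) = fderiv ℝ f x := by
  set t : ℝ × ℝ := (2*π*k.1, 2*π*k.2) with ht
  have hft : (fun z : ℝ × ℝ => f (z + t)) = f := funext fun z => hper z k
  have hd : HasFDerivAt (fun z : ℝ × ℝ => f (z + t)) (fderiv ℝ f (x + t)) x := by
    have h1 : HasFDerivAt (fun z : ℝ × ℝ => z + t)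
        (ContinuousLinearMap.id ℝ (ℝ × ℝ)) x := (hasFDerivAt_id x).add_const t
    have h3 := (hf (x + t)).hasFDerivAt.comp x h1
    rw [ContinuousLinearMap.comp_id] at h3
    exact h3
  have : fderiv ℝ f (x + t) = fderiv ℝ (fun z => f (z + t)) x := (hd.fderiv).symm
  rw [show (x.1 + 2*π*k.1, x.2 + 2*π*k.2) = x + t from rfl, this, hft]

lemma sqrt_add_le' {x y : ℝ} (hx : 0 ≤ x) (hy : 0 ≤ y) :
    Real.sqrt (x + y) ≤ Real.sqrt x + Real.sqrt y := by
  have h : x + y ≤ (Real.sqrt x + Real.sqrt y)^2 := by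
    nlinarith [Real.sq_sqrt hx, Real.sq_sqrt hy, Real.sqrt_nonneg x, Real.sqrt_nonneg y]
  calc Real.sqrt (x + y) ≤ Real.sqrt ((Real.sqrt x + Real.sqrt y)^2) := Real.sqrt_le_sqrt h
    _ = Real.sqrt x + Real.sqrt y := Real.sqrt_sq (by positivity)

lemma cell_volume {n : ℕ} (hn : 1 ≤ n) (p : ℕ × ℕ) :
    (volume (cell n p)).toReal = (2*π/n) * (2*π/n) := by
  have h := eps_pos hn
  rw [cell, Measure.volume_eq_prod, Measure.prod_prod, Real.volume_Ico, Real.volume_Ico,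
    aa_succ_sub, aa_succ_sub, ENNReal.toReal_mul, ENNReal.toReal_ofReal h.le]


/-- Unnormalized `L²` norm over `𝕋²`. -/
noncomputable def L2norm (h : ℝ × ℝ → ℝ) : ℝ :=
  Real.sqrt (∫ x in Q2, (h x) ^ 2)

/-- The `C¹` norm `‖f‖_{C¹} = ‖f‖_{L^∞} + ‖∇f‖_{L^∞}`. -/
noncomputable def C1norm (f : ℝ × ℝ → ℝ) : ℝ :=
  (⨆ x : ℝ × ℝ, |f x|) + ⨆ x : ℝ × ℝ, ‖fderiv ℝ f x‖

set_option maxHeartbeats 1000000 in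
/-- If `f, g` are smooth on `𝕋²` and `g` is `(𝕋/κ)²`-periodic, then
`‖fg‖_{L²} ≤ ‖f‖_{L²} ‖g‖_{L²} + C κ^{-1/2} ‖f‖_{C¹} ‖g‖_{L²}` for a universal `C ≥ 0`. -/
theorem stmt10 :
    ∃ C : ℝ, 0 ≤ C ∧
      ∀ (κ : ℕ), 1 ≤ κ → ∀ (f g : ℝ × ℝ → ℝ),
        ContDiff ℝ (⊤ : ℕ∞) f → ContDiff ℝ (⊤ : ℕ∞) g →
        (∀ (x : ℝ × ℝ) (k : ℤ × ℤ),
          f (x.1 + 2 * π * k.1, x.2 + 2 * π * k.2) = f x) →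
        (∀ (x : ℝ × ℝ) (k : ℤ × ℤ),
          g (x.1 + (2 * π / κ) * k.1, x.2 + (2 * π / κ) * k.2) = g x) →
        L2norm (fun x => f x * g x) ≤
          L2norm f * L2norm g + C * (κ : ℝ) ^ (-(1/2) : ℝ) * C1norm f * L2norm g := by
  have hπ := Real.pi_pos
  refine ⟨Real.sqrt (4*π), Real.sqrt_nonneg _, ?_⟩
  intro κ hκ f g hf hg hfp hgp
  have hfc : Continuous f := hf.continuous
  have hgc : Continuous g := hg.continuous
  have hfd : Differentiable ℝ f := hf.differentiable (by simp)
  set ε : ℝ := 2*π/κ with hε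
  have hεpos : 0 < ε := eps_pos hκ
  have hκpos : (0:ℝ) < κ := by exact_mod_cast hκ
  have hQ2m : MeasurableSet Q2 := measurableSet_Icc.prod measurableSet_Icc
  -- sup bounds
  set Sf : ℝ := ⨆ x : ℝ × ℝ, |f x| with hSfdef
  set Sd : ℝ := ⨆ x : ℝ × ℝ, ‖fderiv ℝ f x‖ with hSddef
  have hbf : BddAbove (Set.range fun x : ℝ × ℝ => |f x|) :=
    bdd_of_periodic _ hfc.abs (fun x k => by rw [hfp x k])
  have hbd : BddAbove (Set.range fun x : ℝ × ℝ => ‖fderiv ℝ f x‖) :=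
    bdd_of_periodic _ (hf.continuous_fderiv (by simp)).norm
      (fun x k => by rw [fderiv_periodic f hfd hfp x k])
  have hSfle : ∀ x, |f x| ≤ Sf := fun x => le_ciSup hbf x
  have hSdle : ∀ x, ‖fderiv ℝ f x‖ ≤ Sd := fun x => le_ciSup hbd x
  have hSf0 : 0 ≤ Sf := le_trans (abs_nonneg _) (hSfle 0)
  have hSd0 : 0 ≤ Sd := le_trans (norm_nonneg _) (hSdle 0)
  -- Lipschitz-type bound for f²
  have hlip : ∀ x y : ℝ × ℝ, f x ^ 2 ≤ f y ^ 2 + 2*Sf*Sd*‖x - y‖ := by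
    intro x y
    have h1 : |f x - f y| ≤ Sd * ‖x - y‖ := by
      have := Convex.norm_image_sub_le_of_norm_fderiv_le
        (f := f) (fun z _ => (hfd z) ) (fun z _ => hSdle z) convex_univ
        (Set.mem_univ y) (Set.mem_univ x)
      simpa [Real.norm_eq_abs] using this
    have h2 : |f x + f y| ≤ 2 * Sf := by
      calc |f x + f y| ≤ |f x| + |f y| := abs_add_le _ _
        _ ≤ Sf + Sf := add_le_add (hSfle x) (hSfle y)
        _ = 2 * Sf := by ring
    have h3 : f x ^ 2 - f y ^ 2 ≤ (Sd * ‖x - y‖) * (2 * Sf) := by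
      calc f x ^ 2 - f y ^ 2 = (f x - f y) * (f x + f y) := by ring
        _ ≤ |(f x - f y) * (f x + f y)| := le_abs_self _
        _ = |f x - f y| * |f x + f y| := abs_mul _ _
        _ ≤ (Sd * ‖x - y‖) * (2 * Sf) :=
            mul_le_mul h1 h2 (abs_nonneg _) (by positivity)
    nlinarith
  -- cell diameter
  have hdiam : ∀ p : ℕ × ℕ, ∀ x ∈ cell κ p, ∀ y ∈ cell κ p, ‖x - y‖ ≤ ε := by
    intro p x hx y hy
    have e1 := aa_succ_sub κ p.1
    have e2 := aa_succ_sub κ p.2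
    obtain ⟨hx1, hx2⟩ := hx
    obtain ⟨hy1, hy2⟩ := hy
    simp only [Set.mem_Ico] at hx1 hx2 hy1 hy2
    rw [Prod.norm_def]
    apply max_le <;>
      · rw [Real.norm_eq_abs]
        simp only [Prod.fst_sub, Prod.snd_sub]
        rw [abs_sub_le_iff]
        constructor <;> linarith
  -- corners
  set c : ℕ × ℕ → ℝ × ℝ := fun p => (aa κ p.1, aa κ p.2) with hcdef
  have hc_mem : ∀ p, c p ∈ cell κ p :=
    fun p => ⟨⟨le_refl _, aa_lt hκ p.1⟩, ⟨le_refl _, aa_lt hκ p.2⟩⟩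
  set B : ℝ := 2*Sf*Sd*ε with hBdef
  have hB0 : 0 ≤ B := by positivity
  have hosc1 : ∀ p, ∀ z ∈ cell κ p, f z ^ 2 ≤ f (c p) ^ 2 + B := by
    intro p z hz
    have hd := hdiam p z hz (c p) (hc_mem p)
    have := hlip z (c p)
    nlinarith [mul_le_mul_of_nonneg_left hd (by positivity : (0:ℝ) ≤ 2*Sf*Sd)]
  have hosc2 : ∀ p, ∀ z ∈ cell κ p, f (c p) ^ 2 ≤ f z ^ 2 + B := by
    intro p z hz
    have hd := hdiam p (c p) (hc_mem p) z hz
    have := hlip (c p) z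
    nlinarith [mul_le_mul_of_nonneg_left hd (by positivity : (0:ℝ) ≤ 2*Sf*Sd)]
  clear_value Sf Sd B
  -- integrals
  set G : ℝ := ∫ z in Q2, (g z)^2 with hGdef
  set F : ℝ := ∫ z in Q2, (f z)^2 with hFdef
  have hgsqc : Continuous fun z : ℝ × ℝ => (g z)^2 := hgc.pow 2
  have hfsqc : Continuous fun z : ℝ × ℝ => (f z)^2 := hfc.pow 2
  have hfgsqc : Continuous fun z : ℝ × ℝ => (f z * g z)^2 := (hfc.mul hgc).pow 2
  have hG0 : 0 ≤ G := setIntegral_nonneg hQ2m (fun z _ => sq_nonneg _)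
  have hF0 : 0 ≤ F := setIntegral_nonneg hQ2m (fun z _ => sq_nonneg _)
  clear_value F G
  -- periodicity of g²
  have hgper : ∀ (z : ℝ × ℝ) (j k : ℕ), (g (z.1 + j * ε, z.2 + k * ε))^2 = (g z)^2 := by
    intro z j k
    have h := hgp z ((j:ℤ), (k:ℤ))
    push_cast at h
    rw [show (j:ℝ) * ε = (2*π/κ) * (j:ℝ) by rw [hε]; ring,
        show (k:ℝ) * ε = (2*π/κ) * (k:ℝ) by rw [hε]; ring, h]
  -- all cells carry equal g²-mass
  have heqg : ∀ p, ∫ z in cell κ p, (g z)^2 = ∫ z in cell κ (0,0), (g z)^2 :=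
    fun p => cell_translate hκ _ (fun z j k => hgper z j k) p
  have hcellG : ∀ p, ∫ z in cell κ p, (g z)^2 = G / (κ:ℝ)^2 := by
    have hsum := split_integral hκ hgsqc (n := κ)
    have hGeq : G = ((κ:ℝ)^2) * ∫ z in cell κ (0,0), (g z)^2 := by
      rw [hGdef, hsum, Finset.sum_congr rfl (fun q _ => heqg q), Finset.sum_const,
        Finset.card_product, Finset.card_range, nsmul_eq_mul]
      push_cast; ring
    intro p
    rw [heqg p, hGeq]
    field_simp
  -- per-cell estimate
  have key : ∀ p ∈ Finset.range κ ×ˢ Finset.range κ,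
      ∫ z in cell κ p, (f z * g z)^2 ≤
        ((1/ε^2) * (∫ z in cell κ p, (f z)^2) + 2*B) * (G / (κ:ℝ)^2) := by
    intro p _
    have h1 : ∫ z in cell κ p, (f z * g z)^2
        ≤ (f (c p)^2 + B) * ∫ z in cell κ p, (g z)^2 := by
      rw [← MeasureTheory.integral_const_mul]
      refine setIntegral_mono_on (cell_integrableOn hfgsqc p)
        ((cell_integrableOn hgsqc p).const_mul _) (cell_measurable κ p) ?_
      intro z hz
      calc (f z * g z)^2 = f z ^2 * (g z)^2 := by ring
        _ ≤ (f (c p)^2 + B) * (g z)^2 :=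
            mul_le_mul_of_nonneg_right (hosc1 p z hz) (sq_nonneg _)
    have h2 : f (c p)^2 ≤ (1/ε^2) * (∫ z in cell κ p, (f z)^2) + B := by
      have hconst : ∫ _z in cell κ p, (f (c p)^2 - B) ≤ ∫ z in cell κ p, (f z)^2 := by
        refine setIntegral_mono_on ?_ (cell_integrableOn hfsqc p) (cell_measurable κ p) ?_
        · refine (integrableOn_const_iff (by simp)).mpr (Or.inr ?_)
          rw [cell, Measure.volume_eq_prod, Measure.prod_prod]
          exact ENNReal.mul_lt_top (by simp [Real.volume_Ico]) (by simp [Real.volume_Ico])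
        · intro z hz
          have := hosc2 p z hz
          linarith
      rw [setIntegral_const, measureReal_def, cell_volume hκ p, smul_eq_mul] at hconst
      have hsq : (0:ℝ) < ε * ε := by positivity
      have h' : f (c p)^2 - B ≤ (∫ z in cell κ p, (f z)^2) / (ε * ε) :=
        (le_div_iff₀ hsq).mpr (by rw [mul_comm]; exact hconst)
      have heq : (∫ z in cell κ p, (f z)^2) / (ε * ε)
          = (1/ε^2) * (∫ z in cell κ p, (f z)^2) := by
        rw [pow_two]; ring
      rw [heq] at h'
      linarith
    rw [hcellG p] at h1
    have hGk : 0 ≤ G / (κ:ℝ)^2 := by positivity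
    calc ∫ z in cell κ p, (f z * g z)^2 ≤ (f (c p)^2 + B) * (G / (κ:ℝ)^2) := h1
      _ ≤ ((1/ε^2) * (∫ z in cell κ p, (f z)^2) + 2*B) * (G / (κ:ℝ)^2) := by
          apply mul_le_mul_of_nonneg_right _ hGk
          linarith
  -- summation
  have hεκ : ε * κ = 2*π := by rw [hε]; field_simp
  set S : ℝ := Sf + Sd with hSdef
  have hS0 : 0 ≤ S := by positivity
  clear_value S
  have main : (∫ z in Q2, (f z * g z)^2) ≤ F*G + (4*π/κ) * S^2 * G := by
    rw [split_integral hκ hfgsqc (n := κ)]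
    have step1 : ∑ p ∈ Finset.range κ ×ˢ Finset.range κ, ∫ z in cell κ p, (f z * g z)^2
        ≤ ∑ p ∈ Finset.range κ ×ˢ Finset.range κ,
            ((1/ε^2) * (∫ z in cell κ p, (f z)^2) + 2*B) * (G / (κ:ℝ)^2) :=
      Finset.sum_le_sum key
    have step2 : ∑ p ∈ Finset.range κ ×ˢ Finset.range κ,
          ((1/ε^2) * (∫ z in cell κ p, (f z)^2) + 2*B) * (G / (κ:ℝ)^2)
        = (1/ε^2) * (G / (κ:ℝ)^2) * F + ((κ:ℝ)^2) * (2*B*(G / (κ:ℝ)^2)) := by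
      calc ∑ p ∈ Finset.range κ ×ˢ Finset.range κ,
            ((1/ε^2) * (∫ z in cell κ p, (f z)^2) + 2*B) * (G / (κ:ℝ)^2)
          = ∑ p ∈ Finset.range κ ×ˢ Finset.range κ,
            ((1/ε^2) * (G / (κ:ℝ)^2) * (∫ z in cell κ p, (f z)^2) + 2*B*(G / (κ:ℝ)^2)) := by
            refine Finset.sum_congr rfl (fun q _ => ?_); ring
        _ = (1/ε^2) * (G / (κ:ℝ)^2) *
              (∑ p ∈ Finset.range κ ×ˢ Finset.range κ, ∫ z in cell κ p, (f z)^2)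
            + ((Finset.range κ ×ˢ Finset.range κ).card : ℝ) * (2*B*(G / (κ:ℝ)^2)) := by
            rw [Finset.sum_add_distrib, ← Finset.mul_sum, Finset.sum_const, nsmul_eq_mul]
        _ = (1/ε^2) * (G / (κ:ℝ)^2) * F + ((κ:ℝ)^2) * (2*B*(G / (κ:ℝ)^2)) := by
            rw [← split_integral hκ hfsqc (n := κ), ← hFdef,
              Finset.card_product, Finset.card_range]
            push_cast; ring
    have hterm1 : (1/ε^2) * (G / (κ:ℝ)^2) * F ≤ F * G := by
      have h4π : (1:ℝ) ≤ 4*π^2 := by nlinarith [Real.pi_gt_three]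
      have : (1/ε^2) * (G / (κ:ℝ)^2) * F = F * G / (4*π^2) := by
        rw [show (4:ℝ)*π^2 = (ε*κ)^2 by rw [hεκ]; ring]
        field_simp
      rw [this]
      rw [div_le_iff₀ (by positivity)]
      nlinarith [mul_nonneg hF0 hG0, h4π]
    have hterm2 : ((κ:ℝ)^2) * (2*B*(G / (κ:ℝ)^2)) ≤ (4*π/κ) * S^2 * G := by
      have h1 : ((κ:ℝ)^2) * (2*B*(G / (κ:ℝ)^2)) = 2*B*G := by
        field_simp
      have h2 : 2*B ≤ (4*π/κ) * S^2 := by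
        have hss : 2*Sf*Sd ≤ S^2 := by
          rw [hSdef]; nlinarith [sq_nonneg (Sf - Sd), hSf0, hSd0]
        have : 2*B = 2*(2*Sf*Sd)*ε := by rw [hBdef]; ring
        rw [this, show (4:ℝ)*π/κ = 2*ε by rw [hε]; ring]
        nlinarith [hss, hεpos.le]
      rw [h1]
      calc 2*B*G ≤ ((4*π/κ) * S^2)*G := mul_le_mul_of_nonneg_right h2 hG0
        _ = (4*π/κ) * S^2 * G := by ring
    calc ∑ p ∈ Finset.range κ ×ˢ Finset.range κ, ∫ z in cell κ p, (f z * g z)^2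
        ≤ (1/ε^2) * (G / (κ:ℝ)^2) * F + ((κ:ℝ)^2) * (2*B*(G / (κ:ℝ)^2)) := by
          rw [← step2]; exact step1
      _ ≤ F*G + (4*π/κ) * S^2 * G := add_le_add hterm1 hterm2
  -- conclusion via square roots
  have hrpow : ((κ:ℝ)) ^ (-(1/2) : ℝ) = (Real.sqrt (κ:ℝ))⁻¹ := by
    rw [Real.rpow_neg hκpos.le, Real.sqrt_eq_rpow]
  have hC1 : C1norm f = S := by rw [hSdef, hSfdef, hSddef]; rfl
  rw [show L2norm f = Real.sqrt F from (by simp only [L2norm]; rw [hFdef]),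
    show L2norm g = Real.sqrt G from (by simp only [L2norm]; rw [hGdef]), hC1, hrpow,
    show L2norm (fun x => f x * g x) = Real.sqrt (∫ z in Q2, (f z * g z)^2) from rfl]
  calc Real.sqrt (∫ z in Q2, (f z * g z)^2)
      ≤ Real.sqrt (F*G + (4*π/κ) * S^2 * G) := Real.sqrt_le_sqrt main
    _ ≤ Real.sqrt (F*G) + Real.sqrt ((4*π/κ) * S^2 * G) :=
        sqrt_add_le' (mul_nonneg hF0 hG0) (by positivity)
    _ = Real.sqrt F * Real.sqrt G
        + Real.sqrt (4*π) * (Real.sqrt (κ:ℝ))⁻¹ * S * Real.sqrt G := by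
        rw [Real.sqrt_mul hF0]
        congr 1
        rw [show (4*π/κ) * S^2 * G = (4*π) * (((κ:ℝ))⁻¹ * (S^2 * G)) by ring,
          Real.sqrt_mul (show (0:ℝ) ≤ 4*π by positivity) (((κ:ℝ))⁻¹ * (S^2 * G)),
          Real.sqrt_mul (show (0:ℝ) ≤ ((κ:ℝ))⁻¹ by positivity) (S^2 * G),
          Real.sqrt_mul (sq_nonneg S) G, Real.sqrt_sq hS0, Real.sqrt_inv]
        ring
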